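/- arXiv:1804.07368 — 2 statements merged into one kernel-verified Lean document; each statement's English description precedes it below -/
import Mathlib

section
/- Let κ ∈ (0,1], b ∈ ℝ, C > 0, and suppose for a connection function g scaled at r_n = sqrt((ln n + b)/(Cκn)) we have H₁ = C r_n²/(2π) and H₀ = Θ(r_n). Then the approximation formula P̃_n = 1 - exp[-κn·e^{-2πκn H₁} - (2/H₀)e^{-πκn H₁} - (4/(κn H₀²))e^{-πκn H₁/2}] converges to 1 - exp(-κ e^{-b}) as n → ∞. -/
open Real Filter

/-- If `H₁ = C r_n²/(2π)` and `H₀ = Θ(r_n)` with `r_n = sqrt((ln n + b)/(Cκn))`, then the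
Dettmann–Georgiou approximation formula
`P̃_n = 1 - exp[-κn e^{-2πκn H₁} - (2/H₀) e^{-πκn H₁} - (4/(κn H₀²)) e^{-πκn H₁/2}]`
converges to `1 - exp(-κ e^{-b})` as `n → ∞`. -/
theorem approximation_formula_limit (κ C b : ℝ) (hκ : κ ∈ Set.Ioc (0 : ℝ) 1) (hC : 0 < C)
    (r H0 H1 : ℕ → ℝ)
    (hr : ∀ n : ℕ, r n = Real.sqrt ((Real.log n + b) / (C * κ * n)))
    (hH1 : ∀ n : ℕ, H1 n = C * (r n) ^ 2 / (2 * π))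
    (hH0 : ∃ c₁ c₂ : ℝ, 0 < c₁ ∧ 0 < c₂ ∧
      ∀ᶠ n : ℕ in atTop, c₁ * r n ≤ H0 n ∧ H0 n ≤ c₂ * r n) :
    Tendsto (fun n : ℕ =>
        1 - Real.exp (-(κ * n * Real.exp (-(2 * π * κ * n * H1 n))
          + (2 / H0 n) * Real.exp (-(π * κ * n * H1 n))
          + (4 / (κ * n * (H0 n) ^ 2)) * Real.exp (-(π * κ * n * H1 n / 2)))))
      atTop (nhds (1 - Real.exp (-(κ * Real.exp (-b))))) := by
  obtain ⟨hκ0, hκ1⟩ := hκ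
  obtain ⟨c₁, c₂, hc₁, hc₂, hev⟩ := hH0
  -- log n + b → ∞
  have hL : Tendsto (fun n : ℕ => Real.log n + b) atTop atTop :=
    tendsto_atTop_add_const_right _ b
      (Real.tendsto_log_atTop.comp tendsto_natCast_atTop_atTop)
  have hL1 : ∀ᶠ n : ℕ in atTop, (1 : ℝ) ≤ Real.log n + b := hL.eventually_ge_atTop 1
  have hn1 : ∀ᶠ n : ℕ in atTop, 1 ≤ n := eventually_ge_atTop 1
  -- the sum of the three terms tends to κ e^{-b}
  have hsum : Tendsto (fun n : ℕ =>
      κ * n * Real.exp (-(2 * π * κ * n * H1 n))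
        + ((2 / H0 n) * Real.exp (-(π * κ * n * H1 n))
          + (4 / (κ * n * (H0 n) ^ 2)) * Real.exp (-(π * κ * n * H1 n / 2))))
      atTop (nhds (κ * Real.exp (-b) + 0)) := by
    apply Tendsto.add
    · -- first term is eventually constant κ e^{-b}
      apply Tendsto.congr' _ tendsto_const_nhds
      filter_upwards [hL1, hn1] with n hLn hn
      have npos : (0 : ℝ) < n := by exact_mod_cast hn
      have hden : (0 : ℝ) < C * κ * n := by positivity
      have rsq : (r n) ^ 2 = (Real.log n + b) / (C * κ * n) := by
        rw [hr, Real.sq_sqrt (div_nonneg (by linarith) hden.le)]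
      have hE : 2 * π * κ * n * H1 n = Real.log n + b := by
        rw [hH1, rsq]
        field_simp
      have hne : Real.exp (-(Real.log n + b)) = (↑n * Real.exp b)⁻¹ := by
        rw [Real.exp_neg, Real.exp_add, Real.exp_log npos]
      rw [hE, hne, Real.exp_neg]
      field_simp
    · -- the remaining two terms tend to 0
      apply squeeze_zero' (g := fun n : ℕ =>
        (2 / c₁) * Real.sqrt (C * κ * Real.exp (-b)) / Real.sqrt (Real.log n + b)
          + 4 * C / (c₁ ^ 2 * (Real.log n + b)))
      · filter_upwards [hL1, hn1, hev] with n hLn hn hH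
        have npos : (0 : ℝ) < n := by exact_mod_cast hn
        have hden : (0 : ℝ) < C * κ * n := by positivity
        have rpos : 0 < r n := by
          rw [hr]; exact Real.sqrt_pos.mpr (div_pos (by linarith) hden)
        have h0pos : 0 < H0 n := lt_of_lt_of_le (by positivity) hH.1
        positivity
      · filter_upwards [hL1, hn1, hev] with n hLn hn hH
        set L := Real.log n + b with hLdef
        have npos : (0 : ℝ) < n := by exact_mod_cast hn
        have hden : (0 : ℝ) < C * κ * n := by positivity
        have hLpos : (0 : ℝ) < L := by linarith
        have rsq : (r n) ^ 2 = L / (C * κ * n) := by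
          rw [hr, Real.sq_sqrt (div_nonneg hLpos.le hden.le)]
        have rpos : 0 < r n := by
          rw [hr]; exact Real.sqrt_pos.mpr (div_pos hLpos hden)
        have h0pos : 0 < H0 n := lt_of_lt_of_le (by positivity) hH.1
        have hE2 : π * κ * n * H1 n = L / 2 := by
          rw [hH1, rsq]; field_simp
        have hE3 : π * κ * n * H1 n / 2 = L / 4 := by
          rw [hH1, rsq]; field_simp; ring
        have hc1r : 0 < c₁ * r n := by positivity
        -- bound the second term
        have ht2 : (2 / H0 n) * Real.exp (-(π * κ * n * H1 n)) ≤
            (2 / c₁) * Real.sqrt (C * κ * Real.exp (-b)) / Real.sqrt L := by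
          rw [hE2]
          have step1 : (2 / H0 n) * Real.exp (-(L / 2)) ≤
              (2 / (c₁ * r n)) * Real.exp (-(L / 2)) := by
            apply mul_le_mul_of_nonneg_right _ (Real.exp_nonneg _)
            exact div_le_div_of_nonneg_left (by norm_num) hc1r hH.1
          refine step1.trans (le_of_eq ?_)
          have hexp : Real.exp (-(L / 2)) = Real.sqrt (Real.exp (-L)) := by
            rw [show -(L / 2) = -L / 2 by ring, Real.exp_half]
          have hexpL : Real.exp (-L) = Real.exp (-b) / n := by
            rw [hLdef, show -(Real.log n + b) = -Real.log n + -b by ring,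
              Real.exp_add, Real.exp_neg, Real.exp_neg, Real.exp_log npos]
            ring
          have e1 : r n = Real.sqrt L / Real.sqrt (C * κ * n) := by
            rw [hr, ← hLdef, Real.sqrt_div hLpos.le]
          have e2 : Real.sqrt (Real.exp (-b) / n) =
              Real.sqrt (Real.exp (-b)) / Real.sqrt n := Real.sqrt_div (Real.exp_nonneg _) _
          have e3 : Real.sqrt (C * κ * Real.exp (-b)) =
              Real.sqrt (C * κ) * Real.sqrt (Real.exp (-b)) :=
            Real.sqrt_mul (by positivity) _
          have e4 : Real.sqrt (C * κ * n) = Real.sqrt (C * κ) * Real.sqrt n :=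
            Real.sqrt_mul (by positivity) _
          have sL : Real.sqrt L ≠ 0 := by positivity
          have sn : Real.sqrt (n : ℝ) ≠ 0 := by positivity
          have sck : Real.sqrt (C * κ) ≠ 0 := by positivity
          rw [hexp, hexpL, e1, e2, e3, e4]
          field_simp
        -- bound the third term
        have ht3 : (4 / (κ * n * (H0 n) ^ 2)) * Real.exp (-(π * κ * n * H1 n / 2)) ≤
            4 * C / (c₁ ^ 2 * L) := by
          rw [hE3]
          have hsq : c₁ ^ 2 * (r n) ^ 2 ≤ (H0 n) ^ 2 := by nlinarith [hH.1]
          have hk : c₁ ^ 2 * L / C ≤ κ * n * (H0 n) ^ 2 := by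
            have heq : κ * n * (c₁ ^ 2 * ((r n) ^ 2)) = c₁ ^ 2 * L / C := by
              rw [rsq]; field_simp
            have hm : κ * n * (c₁ ^ 2 * ((r n) ^ 2)) ≤ κ * n * (H0 n) ^ 2 :=
              mul_le_mul_of_nonneg_left hsq (by positivity)
            linarith [heq ▸ hm]
          have hk' : c₁ ^ 2 * L ≤ κ * n * (H0 n) ^ 2 * C := (div_le_iff₀ hC).mp hk
          have h1 : 4 / (κ * n * (H0 n) ^ 2) ≤ 4 * C / (c₁ ^ 2 * L) := by
            rw [div_le_div_iff₀ (by positivity) (by positivity)]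
            linarith
          have h2 : Real.exp (-(L / 4)) ≤ 1 := Real.exp_le_one_iff.mpr (by linarith)
          calc (4 / (κ * n * (H0 n) ^ 2)) * Real.exp (-(L / 4))
              ≤ (4 * C / (c₁ ^ 2 * L)) * 1 :=
                mul_le_mul h1 h2 (Real.exp_nonneg _) (by positivity)
            _ = 4 * C / (c₁ ^ 2 * L) := by ring
        exact add_le_add ht2 ht3
      · -- the bounding function tends to 0
        have hsqrt : Tendsto (fun n : ℕ => Real.sqrt (Real.log n + b)) atTop atTop := by
          have h12 : Tendsto (fun x : ℝ => x ^ (1 / 2 : ℝ)) atTop atTop :=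
            tendsto_rpow_atTop (by norm_num)
          exact (h12.comp hL).congr fun n => (Real.sqrt_eq_rpow _).symm
        have b2 : Tendsto (fun n : ℕ =>
            (2 / c₁) * Real.sqrt (C * κ * Real.exp (-b)) / Real.sqrt (Real.log n + b))
            atTop (nhds 0) := tendsto_const_nhds.div_atTop hsqrt
        have b3 : Tendsto (fun n : ℕ => 4 * C / (c₁ ^ 2 * (Real.log n + b)))
            atTop (nhds 0) :=
          tendsto_const_nhds.div_atTop (hL.const_mul_atTop (by positivity))
        simpa using b2.add b3
  have hc : Continuous fun x : ℝ => 1 - Real.exp (-x) :=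
    continuous_const.sub (Real.continuous_exp.comp continuous_neg)
  have := (hc.tendsto (κ * Real.exp (-b))).comp (by simpa using hsum)
  refine this.congr fun n => ?_
  simp only [Function.comp_apply]
  ring_nf
end

section
/- With κ = 1 - ε for ε ∈ [0,1), the sequence P̃_n(ε) = 1 - exp(-κ · n^{1 - 2κ}) (the approximate network breakdown probability of the Rayleigh SISO model with η = 2 and β = πn/(2 ln n)) converges to 0 as n → ∞ if ε < 1/2, and converges to 1 if ε > 1/2. -/
open Real Filter Topology

section OneSubExpNeg

variable {α : Type*} {l : Filter α} {u : α → ℝ}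

theorem tendsto_one_sub_exp_neg_of_tendsto_zero (hu : Tendsto u l (𝓝 0)) :
    Tendsto (fun x => 1 - exp (-u x)) l (𝓝 0) := by
  have h : Continuous fun t : ℝ => 1 - exp (-t) := by fun_prop
  simpa [Function.comp_def] using (h.tendsto 0).comp hu

theorem tendsto_one_sub_exp_neg_of_tendsto_atTop (hu : Tendsto u l atTop) :
    Tendsto (fun x => 1 - exp (-u x)) l (𝓝 1) := by
  simpa using tendsto_const_nhds.sub (tendsto_exp_atBot.comp (tendsto_neg_atTop_atBot.comp hu))

end OneSubExpNeg

theorem tendsto_const_mul_natCast_rpow_of_neg (c : ℝ) {p : ℝ} (hp : p < 0) :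
    Tendsto (fun n : ℕ => c * (n : ℝ) ^ p) atTop (𝓝 0) := by
  have h := (tendsto_rpow_neg_atTop (neg_pos.mpr hp)).comp tendsto_natCast_atTop_atTop
  simpa using h.const_mul c

theorem tendsto_const_mul_natCast_rpow_of_pos {c p : ℝ} (hc : 0 < c) (hp : 0 < p) :
    Tendsto (fun n : ℕ => c * (n : ℝ) ^ p) atTop atTop :=
  ((tendsto_rpow_atTop hp).comp tendsto_natCast_atTop_atTop).const_mul_atTop hc

/-- With `κ = 1 - ε`, `ε ∈ [0,1)`, the approximate network breakdown probability
`P̃_n(ε) = 1 - exp(-κ n^{1-2κ})` of the Rayleigh SISO model (`η = 2`, `β = πn/(2 ln n)`)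
tends to `0` if `ε < 1/2` and to `1` if `ε > 1/2`. -/
theorem breakdown_threshold_eta_two (ε : ℝ) (hε : ε ∈ Set.Ico (0 : ℝ) 1) :
    (ε < 1 / 2 →
      Tendsto (fun n : ℕ => 1 - Real.exp (-((1 - ε) * (n : ℝ) ^ (1 - 2 * (1 - ε)))))
        atTop (nhds 0)) ∧
    (ε > 1 / 2 →
      Tendsto (fun n : ℕ => 1 - Real.exp (-((1 - ε) * (n : ℝ) ^ (1 - 2 * (1 - ε)))))
        atTop (nhds 1)) := by
  refine ⟨fun hlt => ?_, fun hgt => ?_⟩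
  · exact tendsto_one_sub_exp_neg_of_tendsto_zero
      (tendsto_const_mul_natCast_rpow_of_neg _ (by linarith))
  · exact tendsto_one_sub_exp_neg_of_tendsto_atTop
      (tendsto_const_mul_natCast_rpow_of_pos (by linarith [hε.2]) (by linarith))
end
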